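/- There exists a positive bounded function ν : ℝ → ℝ with period |log β| such that F_{β,p}(x) = x^{log p / log β} · ν(log x) for all 0 < x ≤ 1. -/

import Mathlib

/-!
For `x ≤ 0` monotonicity squeezes the functional equation to `F x = F (x / β)`, so `F` is
constant along `x / βⁿ → -∞` and vanishes; applied to `y ↦ 1 - F (1 - y)`, which satisfies the
same equation with `p` and `q` swapped, the same argument gives `F = 1` on `[1, ∞)`. Since
`β ≤ 1/2`, the second term of the equation then drops out on `(-∞, β]`, leaving
`F (β x) = p F x` there. With `α = log_β p` we have `β ^ α = p`, so `x ↦ F x / x ^ α` is invariant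
under `x ↦ β x` on `(0, 1]`; in the variable `t = log x` this is invariance under `t ↦ t - |log β|`
on `t ≤ 0`, and `ν` is the periodic extension of its restriction to `(-|log β|, 0]`.
-/

open Filter Real

lemma comp_toIocMod_eq_of_nonpos {G : ℝ → ℝ} {L : ℝ} (hL : 0 < L)
    (hG : ∀ t ≤ 0, G (t - L) = G t) {t : ℝ} (ht : t ≤ 0) :
    G (toIocMod hL (-L) t) = G t := by
  have hshift : ∀ n : ℕ, ∀ u ≤ 0, G (u - n * L) = G u := by
    intro n
    induction n with
    | zero => simp
    | succ n ih =>
      intro u hu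
      have hnL : 0 ≤ n * L := by positivity
      rw [show u - (n + 1 : ℕ) * L = u - n * L - L by push_cast; ring, hG _ (by linarith), ih u hu]
  obtain ⟨hm, hm0⟩ := toIocMod_mem_Ioc hL (-L) t
  have hsum := toIocMod_add_toIocDiv_zsmul hL (-L) t
  rw [zsmul_eq_mul] at hsum
  have hdiv : toIocDiv hL (-L) t ≤ 0 := by
    have : (toIocDiv hL (-L) t : ℝ) < 1 := lt_of_mul_lt_mul_right (by linarith) hL.le
    exact Int.lt_add_one_iff.mp (by exact_mod_cast this)
  obtain ⟨n, hn⟩ := Int.exists_eq_neg_ofNat hdiv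
  rw [hn, Int.cast_neg, Int.cast_natCast, neg_mul, ← sub_eq_add_neg] at hsum
  rw [← hshift n (toIocMod hL (-L) t) (by linarith), hsum]

structure IsSelfSimilarCDF (β p q : ℝ) (F : ℝ → ℝ) : Prop where
  monotone : Monotone F
  tendsto_atBot : Tendsto F atBot (nhds 0)
  tendsto_atTop : Tendsto F atTop (nhds 1)
  eq : ∀ x, F x = p * F (x / β) + q * F (x / β + 1 - 1 / β)

namespace IsSelfSimilarCDF

variable {β p q : ℝ} {F : ℝ → ℝ}

lemma reflect (hpq : p + q = 1) (hF : IsSelfSimilarCDF β p q F) :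
    IsSelfSimilarCDF β q p fun y => 1 - F (1 - y) where
  monotone _ _ hab := sub_le_sub_left (hF.monotone (sub_le_sub_left hab 1)) 1
  tendsto_atBot := by
    simpa [sub_eq_add_neg] using
      (hF.tendsto_atTop.comp (tendsto_atTop_add_const_left _ 1 tendsto_neg_atBot_atTop)).const_sub 1
  tendsto_atTop := by
    simpa [sub_eq_add_neg] using
      (hF.tendsto_atBot.comp (tendsto_atBot_add_const_left _ 1 tendsto_neg_atTop_atBot)).const_sub 1
  eq y := by
    have h := hF.eq (1 - y)
    rw [show (1 - y) / β = 1 - (y / β + 1 - 1 / β) by ring,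
      show 1 - (y / β + 1 - 1 / β) + 1 - 1 / β = 1 - y / β by ring] at h
    linear_combination -h - hpq

lemma le_one (hF : IsSelfSimilarCDF β p q F) (x : ℝ) : F x ≤ 1 :=
  hF.monotone.ge_of_tendsto hF.tendsto_atTop x

lemma eq_zero_of_nonpos (hβ0 : 0 < β) (hβ1 : β < 1) (hq : 0 < q) (hpq : p + q = 1)
    (hF : IsSelfSimilarCDF β p q F) {x : ℝ} (hx : x ≤ 0) : F x = 0 := by
  have h1β : 1 < 1 / β := by rw [lt_div_iff₀ hβ0]; linarith
  have hstep : ∀ x ≤ 0, F x = F (x / β) := by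
    intro x hx
    have hle : F (x / β + 1 - 1 / β) ≤ F (x / β) := hF.monotone (by linarith)
    refine le_antisymm ?_ (hF.monotone (by rw [div_le_iff₀ hβ0]; nlinarith))
    calc F x = p * F (x / β) + q * F (x / β + 1 - 1 / β) := hF.eq x
      _ ≤ p * F (x / β) + q * F (x / β) := by gcongr
      _ = F (x / β) := by rw [← add_mul, hpq, one_mul]
  have hiter : ∀ x ≤ 0, ∀ n : ℕ, F x = F (x / β ^ n) := by
    intro x hx n
    induction n with
    | zero => simp
    | succ n ih =>
      rw [ih, hstep _ (div_nonpos_of_nonpos_of_nonneg hx (by positivity)), div_div, ← pow_succ]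
  have hneg : ∀ x < 0, F x = 0 := by
    intro x hx
    have hesc : Tendsto (fun n : ℕ => x / β ^ n) atTop atBot := by
      simpa [div_eq_mul_inv, inv_pow] using
        (tendsto_pow_atTop_atTop_of_one_lt ((one_lt_inv₀ hβ0).2 hβ1)).const_mul_atTop_of_neg hx
    exact tendsto_nhds_unique tendsto_const_nhds
      ((hF.tendsto_atBot.comp hesc).congr fun n => (hiter x hx.le n).symm)
  rcases hx.lt_or_eq with hx | rfl
  · exact hneg x hx
  · have h0 := hF.eq 0
    rw [zero_div, hneg (0 + 1 - 1 / β) (by linarith)] at h0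
    nlinarith

lemma eq_one_of_one_le (hβ0 : 0 < β) (hβ1 : β < 1) (hp : 0 < p) (hpq : p + q = 1)
    (hF : IsSelfSimilarCDF β p q F) {x : ℝ} (hx : 1 ≤ x) : F x = 1 := by
  have h := (hF.reflect hpq).eq_zero_of_nonpos hβ0 hβ1 hp (by linarith)
    (show 1 - x ≤ 0 by linarith)
  simp only [sub_sub_cancel] at h
  linarith

lemma apply_mul (hβ0 : 0 < β) (hβ : β ≤ 1 / 2) (hq : 0 < q) (hpq : p + q = 1)
    (hF : IsSelfSimilarCDF β p q F) {x : ℝ} (hx : x ≤ 1) : F (β * x) = p * F x := by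
  have h2β : 2 ≤ 1 / β := by rw [le_div_iff₀ hβ0]; linarith
  rw [hF.eq (β * x), mul_div_cancel_left₀ x hβ0.ne',
    hF.eq_zero_of_nonpos hβ0 (by linarith) hq hpq (by linarith : x + 1 - 1 / β ≤ 0),
    mul_zero, add_zero]

lemma apply_pow (hβ0 : 0 < β) (hβ : β ≤ 1 / 2) (hp : 0 < p) (hq : 0 < q) (hpq : p + q = 1)
    (hF : IsSelfSimilarCDF β p q F) (n : ℕ) : F (β ^ n) = p ^ n := by
  induction n with
  | zero => simpa using hF.eq_one_of_one_le hβ0 (by linarith) hp hpq le_rfl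
  | succ n ih =>
    rw [pow_succ', pow_succ', hF.apply_mul hβ0 hβ hq hpq (pow_le_one₀ hβ0.le (by linarith)), ih]

lemma pos_of_pos (hβ0 : 0 < β) (hβ : β ≤ 1 / 2) (hp : 0 < p) (hq : 0 < q) (hpq : p + q = 1)
    (hF : IsSelfSimilarCDF β p q F) {x : ℝ} (hx : 0 < x) : 0 < F x := by
  obtain ⟨n, hn⟩ := exists_pow_lt_of_lt_one hx (by linarith : β < 1)
  calc 0 < p ^ n := pow_pos hp n
    _ = F (β ^ n) := (hF.apply_pow hβ0 hβ hp hq hpq n).symm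
    _ ≤ F x := hF.monotone hn.le

lemma div_rpow_logb_mul (hβ0 : 0 < β) (hβ : β ≤ 1 / 2) (hp : 0 < p) (hq : 0 < q)
    (hpq : p + q = 1) (hF : IsSelfSimilarCDF β p q F) {x : ℝ} (hx : 0 < x) (hx1 : x ≤ 1) :
    F (β * x) / (β * x) ^ logb β p = F x / x ^ logb β p := by
  have hβp : β ^ logb β p = p := rpow_logb hβ0 (by linarith) hp
  rw [hF.apply_mul hβ0 hβ hq hpq hx1, mul_rpow hβ0.le hx.le, hβp, mul_div_mul_left _ _ hp.ne']

lemma div_rpow_logb_le (hβ0 : 0 < β) (hβ1 : β < 1) (hp : 0 < p) (hp1 : p < 1)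
    (hF : IsSelfSimilarCDF β p q F) {x : ℝ} (hx : β ≤ x) : F x / x ^ logb β p ≤ p⁻¹ := by
  have hβp : β ^ logb β p = p := rpow_logb hβ0 hβ1.ne hp
  have hpx : p ≤ x ^ logb β p :=
    calc p = β ^ logb β p := hβp.symm
      _ ≤ x ^ logb β p := rpow_le_rpow hβ0.le hx (logb_nonneg_of_base_lt_one hβ0 hβ1 hp hp1.le)
  rw [inv_eq_one_div]
  exact div_le_div₀ zero_le_one (hF.le_one x) hp hpx

end IsSelfSimilarCDF

theorem stmt10_general (β p q : ℝ) (hβ0 : 0 < β) (hβ : β ≤ 1/2)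
    (hp0 : 0 < p) (hp1 : p < 1) (hq : q = 1 - p)
    (F : ℝ → ℝ) (hmono : Monotone F)
    (hbot : Filter.Tendsto F Filter.atBot (nhds 0))
    (htop : Filter.Tendsto F Filter.atTop (nhds 1))
    (hF : ∀ x : ℝ, F x = p * F (x / β) + q * F (x / β + 1 - 1 / β)) :
    ∃ ν : ℝ → ℝ, (∀ t : ℝ, 0 < ν t) ∧ (∃ M : ℝ, ∀ t : ℝ, ν t ≤ M) ∧
      (∀ t : ℝ, ν (t + |Real.log β|) = ν t) ∧
      ∀ x : ℝ, 0 < x → x ≤ 1 →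
        F x = x ^ (Real.log p / Real.log β) * ν (Real.log x) := by
  have hβ1 : β < 1 := by linarith
  have hq0 : 0 < q := by linarith
  have hpq : p + q = 1 := by linarith
  have hS : IsSelfSimilarCDF β p q F := ⟨hmono, hbot, htop, hF⟩
  have hlogβ : log β < 0 := log_neg hβ0 hβ1
  have hL : 0 < |log β| := abs_pos.2 hlogβ.ne
  have hexp : ∀ t, exp (t - |log β|) = β * exp t := fun t => by
    rw [abs_of_neg hlogβ, sub_neg_eq_add, exp_add, exp_log hβ0, mul_comm]
  set G : ℝ → ℝ := fun t => F (exp t) / exp t ^ logb β p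
  have hG : ∀ t ≤ 0, G (t - |log β|) = G t := fun t ht => by
    simp only [G, hexp]
    exact hS.div_rpow_logb_mul hβ0 hβ hp0 hq0 hpq (exp_pos t) (exp_le_one_iff.2 ht)
  rw [log_div_log]
  refine ⟨fun t => G (toIocMod hL (-|log β|) t), fun t => ?_, ⟨p⁻¹, fun t => ?_⟩,
    fun t => ?_, fun x hx hx1 => ?_⟩
  · exact div_pos (hS.pos_of_pos hβ0 hβ hp0 hq0 hpq (exp_pos _)) (rpow_pos_of_pos (exp_pos _) _)
  · refine hS.div_rpow_logb_le hβ0 hβ1 hp0 hp1 ?_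
    have hmem := toIocMod_mem_Ioc hL (-|log β|) t
    calc β = exp (0 - |log β|) := by rw [hexp, exp_zero, mul_one]
      _ ≤ exp (toIocMod hL (-|log β|) t) := exp_le_exp.2 (by linarith [hmem.1])
  · simp only [toIocMod_add_right]
  · dsimp only
    rw [comp_toIocMod_eq_of_nonpos hL hG (log_nonpos hx.le hx1)]
    simp only [G, exp_log hx]
    rw [mul_div_cancel₀ _ (rpow_pos_of_pos hx _).ne']

theorem stmt10 (β p q : ℝ) (hβ0 : 0 < β) (hβ : β ≤ 1/2)
    (hp0 : 0 < p) (hp1 : p < 1) (hq : q = 1 - p)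
    (hne : ¬(β = 1/2 ∧ p = 1/2))
    (F : ℝ → ℝ) (hmono : Monotone F)
    (hrc : ∀ x : ℝ, ContinuousWithinAt F (Set.Ici x) x)
    (hbot : Filter.Tendsto F Filter.atBot (nhds 0))
    (htop : Filter.Tendsto F Filter.atTop (nhds 1))
    (hF : ∀ x : ℝ, F x = p * F (x / β) + q * F (x / β + 1 - 1 / β)) :
    ∃ ν : ℝ → ℝ, (∀ t : ℝ, 0 < ν t) ∧ (∃ M : ℝ, ∀ t : ℝ, ν t ≤ M) ∧
      (∀ t : ℝ, ν (t + |Real.log β|) = ν t) ∧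
      ∀ x : ℝ, 0 < x → x ≤ 1 →
        F x = x ^ (Real.log p / Real.log β) * ν (Real.log x) :=
  stmt10_general β p q hβ0 hβ hp0 hp1 hq F hmono hbot htop hF
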